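/- Let G be a finite nilpotent group and φ an automorphism of G with G = [G, φ]. Write G = P_1 × ⋯ × P_k as the direct product of its Sylow subgroups. Then [P_i, φ] = P_i for each i, and k is at most the cardinality of the minimal left Engel sink 𝓛(φ) of φ in G⟨φ⟩. -/

import Mathlib

/-!
The Sylow subgroups of a finite nilpotent group `G` are characteristic and `G` is their direct
product, so each projection `G → P` commutes with `φ` and carries `[G, φ] = G` onto `[P, φ]`.
For nontrivial `P`, the equality `[P, φ] = P` passes to the abelianization, where `u ↦ [u, φ]` is
an endomorphism that is onto, hence injective; so `[u, _n φ] ≠ 1` for all `n` when `u ∉ [P, P]`,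
and the sink meets `P` nontrivially. Sylow subgroups for distinct primes intersect trivially,
which yields distinct sink elements for distinct prime divisors of `|G|`.
-/

/-- The subgroup `[G, φ] = ⟨g⁻¹ g^φ : g ∈ G⟩` for an automorphism `φ` of `G`. -/
def commAut {G : Type} [Group G] (φ : MulAut G) : Subgroup G :=
  Subgroup.closure {x : G | ∃ g : G, x = g⁻¹ * φ g}

/-- Iterated Engel commutator `[u, _n φ]` with `[u, φ] = u⁻¹ u^φ`. -/
def lEngelAut {G : Type} [Group G] (φ : MulAut G) : G → ℕ → G
  | u, 0 => u
  | u, n + 1 => (lEngelAut φ u n)⁻¹ * φ (lEngelAut φ u n)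

/-- A left Engel sink of `φ` (equal to the left Engel sink computed in `G⟨φ⟩`). -/
def IsLeftEngelSinkAut {G : Type} [Group G] (φ : MulAut G) (L : Set G) : Prop :=
  ∀ u : G, ∃ N : ℕ, ∀ n ≥ N, lEngelAut φ u n ∈ L

/-- The minimal left Engel sink of `φ`. -/
def IsMinLeftEngelSinkAut {G : Type} [Group G] (φ : MulAut G) (L : Set G) : Prop :=
  IsLeftEngelSinkAut φ L ∧ ∀ L' : Set G, IsLeftEngelSinkAut φ L' → L ⊆ L'

open Group

instance Nat.fact_prime_of_mem_primeFactors {n : ℕ} (p : n.primeFactors) : Fact (p : ℕ).Prime :=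
  ⟨Nat.prime_of_mem_primeFactors p.2⟩

instance Sylow.characteristic_of_isNilpotent {G : Type*} [Group G] [Finite G] [IsNilpotent G]
    {p : ℕ} [Fact p.Prime] (P : Sylow p G) : (P : Subgroup G).Characteristic :=
  Sylow.characteristic_of_normal P inferInstance

section Equivariant

variable {G H : Type} [Group G] [Group H] {φ : MulAut G} {ψ : MulAut H} {ρ : G →* H}

theorem map_lEngelAut (hρ : ∀ g, ρ (φ g) = ψ (ρ g)) (u : G) (n : ℕ) :
    ρ (lEngelAut φ u n) = lEngelAut ψ (ρ u) n := by
  induction n with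
  | zero => rfl
  | succ n ih => simp only [lEngelAut, map_mul, map_inv, hρ, ih]

theorem map_commAut_le (hρ : ∀ g, ρ (φ g) = ψ (ρ g)) : (commAut φ).map ρ ≤ commAut ψ := by
  rw [commAut, MonoidHom.map_closure, Subgroup.closure_le]
  rintro _ ⟨_, ⟨g, rfl⟩, rfl⟩
  exact Subgroup.subset_closure ⟨ρ g, by rw [map_mul, map_inv, hρ]⟩

theorem commAut_eq_top_of_surjective (hsurj : Function.Surjective ρ)
    (hρ : ∀ g, ρ (φ g) = ψ (ρ g)) (h : commAut φ = ⊤) : commAut ψ = ⊤ := by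
  rw [eq_top_iff, ← MonoidHom.range_eq_top.mpr hsurj, MonoidHom.range_eq_map, ← h]
  exact map_commAut_le hρ

end Equivariant

theorem map_subtype_commAut_characteristic {G : Type} [Group G] (φ : MulAut G) (H : Subgroup G)
    [H.Characteristic] :
    (commAut (MulAut.characteristic H φ)).map H.subtype =
      Subgroup.closure {x : G | ∃ g ∈ H, x = g⁻¹ * φ g} := by
  rw [commAut, MonoidHom.map_closure]
  congr 1
  ext x
  constructor
  · rintro ⟨_, ⟨g, rfl⟩, rfl⟩
    exact ⟨g, g.2, rfl⟩
  · rintro ⟨g, hg, rfl⟩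
    exact ⟨_, ⟨⟨g, hg⟩, rfl⟩, rfl⟩

theorem lEngelAut_ne_one_of_commAut_eq_top {A : Type} [CommGroup A] [Finite A] {ψ : MulAut A}
    (h : commAut ψ = ⊤) {a : A} (ha : a ≠ 1) (n : ℕ) : lEngelAut ψ a n ≠ 1 := by
  let θ : A →* A := (MonoidHom.id A)⁻¹ * ψ.toMonoidHom
  have hiter : ∀ n, lEngelAut ψ a n = θ^[n] a := by
    intro n
    induction n with
    | zero => rfl
    | succ n ih => rw [Function.iterate_succ_apply', ← ih]; rfl
  have hsurj : Function.Surjective θ := by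
    rw [← MonoidHom.range_eq_top, eq_top_iff, ← h, commAut, Subgroup.closure_le]
    rintro _ ⟨u, rfl⟩
    exact ⟨u, rfl⟩
  have hinj : Function.Injective θ^[n] :=
    (Finite.injective_iff_surjective.mpr hsurj).iterate n
  rw [hiter]
  exact (hinj.ne_iff' (Function.iterate_fixed (map_one θ) n)).mpr ha

theorem exists_forall_lEngelAut_ne_one {H : Type} [Group H] [Finite H] [Nontrivial H]
    [Group.IsSolvable H] {ψ : MulAut H} (h : commAut ψ = ⊤) :
    ∃ u : H, ∀ n, lEngelAut ψ u n ≠ 1 := by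
  obtain ⟨u, -, hu⟩ := SetLike.exists_of_lt (Group.IsSolvable.commutator_lt_top_of_nontrivial H)
  have hu' : Abelianization.of u ≠ 1 := by
    rwa [ne_eq, ← MonoidHom.mem_ker, Abelianization.ker_of]
  have hof : ∀ g, Abelianization.of (ψ g) = ψ.abelianizationCongr (Abelianization.of g) :=
    fun _ => rfl
  have hAb := commAut_eq_top_of_surjective QuotientGroup.mk_surjective hof h
  refine ⟨u, fun n hn => lEngelAut_ne_one_of_commAut_eq_top hAb hu' n ?_⟩
  rw [← map_lEngelAut hof, hn, map_one]

theorem exists_mem_of_isLeftEngelSinkAut {G : Type} [Group G] {φ : MulAut G} {L : Set G}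
    (hL : IsLeftEngelSinkAut φ L) (H : Subgroup G) [H.Characteristic] [Finite H] [Nontrivial H]
    [Group.IsSolvable H] (h : commAut (MulAut.characteristic H φ) = ⊤) :
    ∃ x ∈ L, x ∈ H ∧ x ≠ 1 := by
  obtain ⟨u, hu⟩ := exists_forall_lEngelAut_ne_one h
  obtain ⟨N, hN⟩ := hL u
  have hcoe : H.subtype (lEngelAut (MulAut.characteristic H φ) u N) = lEngelAut φ u N :=
    map_lEngelAut (fun _ => rfl) u N
  exact ⟨lEngelAut φ u N, hN N le_rfl, hcoe ▸ (lEngelAut _ u N).2,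
    hcoe ▸ (map_ne_one_iff _ H.subtype_injective).mpr (hu N)⟩

namespace Sylow

variable {G : Type} [Group G] [Finite G]

theorem iSup_primeFactors_eq_top (P : ∀ p : (Nat.card G).primeFactors, Sylow p G) :
    ⨆ p, (P p : Subgroup G) = ⊤ := by
  rw [← Subgroup.index_eq_one, Nat.eq_one_iff_not_exists_prime_dvd]
  intro q hq hdvd
  have := Fact.mk hq
  have hq' : q ∈ (Nat.card G).primeFactors :=
    Nat.mem_primeFactors.mpr ⟨hq, hdvd.trans (Subgroup.index_dvd_card _), Nat.card_pos.ne'⟩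
  exact (P ⟨q, hq'⟩).not_dvd_index (hdvd.trans (Subgroup.index_dvd_of_le
    (le_iSup (fun p => (P p : Subgroup G)) ⟨q, hq'⟩)))

theorem card_primeFactors_le_of_exists_mem (S : Set G)
    (hS : ∀ p ∈ (Nat.card G).primeFactors, ∃ P : Sylow p G, ∃ x ∈ S, x ∈ P ∧ x ≠ 1) :
    (Nat.card G).primeFactors.card ≤ Nat.card S := by
  choose P x hxS hxP hx1 using hS
  let f : (Nat.card G).primeFactors → S := fun p => ⟨x p p.2, hxS p p.2⟩
  have hf : Function.Injective f := by
    intro p q hpq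
    by_contra hne
    have hdisj := IsPGroup.disjoint_of_ne p q (Subtype.coe_injective.ne hne) _ _
      (P p p.2).isPGroup' (P q q.2).isPGroup'
    have hx : x p p.2 = x q q.2 := congrArg Subtype.val hpq
    exact hx1 p p.2 (Subgroup.disjoint_def.mp hdisj (hxP p p.2) (hx ▸ hxP q q.2))
  simpa only [Nat.card_eq_fintype_card, Fintype.card_coe] using
    Nat.card_le_card_of_injective f hf

variable [IsNilpotent G]

theorem commute_of_mem_of_ne {p q : ℕ} [Fact p.Prime] [Fact q.Prime] (hpq : p ≠ q)
    (P : Sylow p G) (Q : Sylow q G) : ∀ x y : G, x ∈ P → y ∈ Q → Commute x y :=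
  Subgroup.commute_of_normal_of_disjoint _ _ inferInstance inferInstance
    (IsPGroup.disjoint_of_ne p q hpq _ _ P.isPGroup' Q.isPGroup')

variable (P : ∀ p : (Nat.card G).primeFactors, Sylow p G)

theorem pairwise_commute : Pairwise fun p q => ∀ x y : G, x ∈ P p → y ∈ P q → Commute x y :=
  fun p q hpq => commute_of_mem_of_ne (Subtype.coe_injective.ne hpq) (P p) (P q)

noncomputable def noncommPiCoprod : (∀ p, P p) →* G :=
  Subgroup.noncommPiCoprod (pairwise_commute P)

theorem noncommPiCoprod_bijective : Function.Bijective (noncommPiCoprod P) := by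
  refine ⟨Subgroup.injective_noncommPiCoprod_of_iSupIndep ?_, ?_⟩
  · have := fun p => Fintype.ofFinite (P p)
    refine Subgroup.independent_of_coprime_order (pairwise_commute P) fun p q hpq => ?_
    simpa only [← Nat.card_eq_fintype_card] using IsPGroup.coprime_card_of_ne _ _
      (Subtype.coe_injective.ne hpq) _ _ (P p).isPGroup' (P q).isPGroup'
  · rw [← MonoidHom.range_eq_top, noncommPiCoprod, Subgroup.noncommPiCoprod_range]
    exact iSup_primeFactors_eq_top P

theorem map_noncommPiCoprod (φ : MulAut G) (f : ∀ p, P p) :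
    φ (noncommPiCoprod P f) =
      noncommPiCoprod P fun p => MulAut.characteristic (P p) φ (f p) := by
  simp only [noncommPiCoprod, Subgroup.noncommPiCoprod_apply]
  exact Finset.map_noncommProd _ _ _ φ

theorem exists_surjective_equivariant (φ : MulAut G) (p : (Nat.card G).primeFactors) :
    ∃ ρ : G →* P p, Function.Surjective ρ ∧
      ∀ g, ρ (φ g) = MulAut.characteristic (P p) φ (ρ g) := by
  let e := MulEquiv.ofBijective _ (noncommPiCoprod_bijective P)
  refine ⟨(Pi.evalMonoidHom _ p).comp e.symm.toMonoidHom,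
    (Function.surjective_eval p).comp e.symm.surjective, fun g => ?_⟩
  obtain ⟨f, rfl⟩ := e.surjective g
  have hφ : φ (e f) = e fun q => MulAut.characteristic (P q) φ (f q) := map_noncommPiCoprod P φ f
  simp [hφ]

theorem commAut_characteristic_eq_top {φ : MulAut G} (h : commAut φ = ⊤) {p : ℕ}
    [Fact p.Prime] (P : Sylow p G) : commAut (MulAut.characteristic P φ) = ⊤ := by
  by_cases hp : p ∈ (Nat.card G).primeFactors
  · have := unique_of_normal P inferInstance
    obtain rfl : P = default := Subsingleton.elim _ _
    obtain ⟨ρ, hsurj, hρ⟩ := exists_surjective_equivariant (fun _ => default) φ ⟨p, hp⟩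
    exact commAut_eq_top_of_surjective hsurj hρ h
  · have hcard : Nat.card P = 1 := by
      rw [P.card_eq_multiplicity, Nat.factorization_eq_zero_of_not_dvd, pow_zero]
      exact fun hdvd => hp (Nat.mem_primeFactors.mpr ⟨Fact.out, hdvd, Nat.card_pos.ne'⟩)
    have := (Nat.card_eq_one_iff_unique.mp hcard).1
    exact Subsingleton.elim _ _

end Sylow

/-- Let `G` be a finite nilpotent group and `φ` an automorphism with `G = [G, φ]`.
Then `[P, φ] = P` for every Sylow subgroup `P` of `G`, and the number of primes
dividing `|G|` (the number of factors in the Sylow decomposition of `G`) is at most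
the cardinality of the minimal left Engel sink of `φ`. -/
theorem stmt16 (G : Type) [Group G] [Finite G] [Group.IsNilpotent G] (φ : MulAut G)
    (h : commAut φ = ⊤) (L : Set G) (hL : IsMinLeftEngelSinkAut φ L) :
    (∀ (p : ℕ), p.Prime → ∀ P : Sylow p G,
        Subgroup.closure {x : G | ∃ g ∈ (P : Subgroup G), x = g⁻¹ * φ g} = (P : Subgroup G)) ∧
      (Nat.card G).primeFactors.card ≤ Nat.card L := by
  refine ⟨fun p hp P => ?_, Sylow.card_primeFactors_le_of_exists_mem L fun p hp => ?_⟩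
  · have := Fact.mk hp
    rw [← map_subtype_commAut_characteristic, Sylow.commAut_characteristic_eq_top h,
      ← MonoidHom.range_eq_map, Subgroup.range_subtype]
  · have := Fact.mk (Nat.prime_of_mem_primeFactors hp)
    let P : Sylow p G := default
    have : Nontrivial P := (Subgroup.nontrivial_iff_ne_bot _).mpr
      (P.ne_bot_of_dvd_card (Nat.dvd_of_mem_primeFactors hp))
    exact ⟨P, exists_mem_of_isLeftEngelSinkAut hL.1 P (Sylow.commAut_characteristic_eq_top h P)⟩
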